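/- Let C be a category with all limits and finite colimits, such that cofiltered limits commute with finite colimits in C, and let X be a profinite space. Then the constant cosheaf functor Δ: C → CoSh(X,C), obtained by cosheafifying the constant precosheaf c ↦ (U ↦ c), is right adjoint to the global cosections functor CoSh(X,C) → C, A ↦ A(X). -/

import Mathlib

open CategoryTheory CategoryTheory.Limits TopologicalSpace

attribute [local instance] CategoryTheory.ConcreteCategory.instFunLike

universe w' w v u v₂ u₂ v₁ u₁

namespace ProfiniteCosheaves

variable {C : Type u₂} [Category.{v₂} C]

/-- The canonical binary cofan `A(U) → A(U ⊔ V) ← A(V)` of a precosheaf `A` at a pair of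
clopen subsets. -/
def cosheafCofan {X : Type*} [TopologicalSpace X] (A : Clopens X ⥤ C) (U V : Clopens X) :
    BinaryCofan (A.obj U) (A.obj V) :=
  BinaryCofan.mk (A.map (homOfLE le_sup_left : U ⟶ U ⊔ V)) (A.map (homOfLE le_sup_right))

/-- A precosheaf (a functor on the poset of clopen subsets) is a cosheaf if its value at `∅`
is initial and, for disjoint clopens `U, V`, the canonical cofan exhibits `A(U ⊔ V)` as the
coproduct `A(U) ⨿ A(V)`. -/
structure IsCosheaf {X : Type*} [TopologicalSpace X] (A : Clopens X ⥤ C) : Prop where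
  initial : Nonempty (IsInitial (A.obj ⊥))
  binary : ∀ U V : Clopens X, Disjoint U V → Nonempty (IsColimit (cosheafCofan A U V))

/-- The category `CoSh(X, C)` of cosheaves over a profinite space `X` valued in `C`. -/
def CoSheaf (X : Profinite.{u}) (C : Type u₂) [Category.{v₂} C] :=
  ObjectProperty.FullSubcategory (fun A : Clopens X ⥤ C => IsCosheaf A)

instance (X : Profinite.{u}) : Category (CoSheaf X C) := ObjectProperty.FullSubcategory.category _

/-- Preimage of clopen subsets along a continuous map, as a functor. -/
def clopensComap {X Y : Profinite.{u}} (f : X ⟶ Y) : Clopens Y ⥤ Clopens X where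
  obj U := ⟨f ⁻¹' (U : Set Y), U.isClopen.preimage f.hom.hom.continuous⟩
  map {U V} h := homOfLE (fun x hx => leOfHom h hx)

theorem IsCosheaf.comap {X Y : Profinite.{u}} (f : X ⟶ Y) {A : Clopens X ⥤ C}
    (hA : IsCosheaf A) : IsCosheaf (clopensComap f ⋙ A) := by
  constructor
  · have e : (clopensComap f).obj ⊥ = ⊥ := by
      apply SetLike.ext'
      simp [clopensComap]
    exact ⟨hA.initial.some.ofIso (A.mapIso (eqToIso e.symm))⟩
  · intro U V hUV
    have hUV' : Disjoint ((clopensComap f).obj U) ((clopensComap f).obj V) := by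
      rw [disjoint_iff] at hUV ⊢
      have h0 : (U : Set (Y : Type u)) ∩ (V : Set (Y : Type u)) = ∅ := by
        have := congrArg (fun W : Clopens (Y : Type u) => (W : Set (Y : Type u))) hUV
        simpa using this
      apply SetLike.ext'
      exact Set.preimage_inter.symm.trans ((congrArg _ h0).trans Set.preimage_empty)
    obtain ⟨h⟩ := hA.binary _ _ hUV'
    have e : (clopensComap f).obj U ⊔ (clopensComap f).obj V = (clopensComap f).obj (U ⊔ V) := by
      apply SetLike.ext'
      exact Set.preimage_union.symm
    refine ⟨h.ofIsoColimit (Cocones.ext (A.mapIso (eqToIso e)) ?_)⟩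
    rintro ⟨⟨⟩⟩ <;>
      · dsimp [cosheafCofan]
        exact (A.map_comp _ _).symm

/-- The direct image functor `f_* : CoSh(X, C) ⥤ CoSh(Y, C)`, `A ↦ A ∘ f⁻¹`. -/
def coshMapFun {X Y : Profinite.{u}} (f : X ⟶ Y) : CoSheaf X C ⥤ CoSheaf Y C :=
  ObjectProperty.lift _
    (ObjectProperty.ι _ ⋙ (Functor.whiskeringLeft (Clopens Y) (Clopens X) C).obj (clopensComap f))
    (fun A => A.property.comap f)

/-- The functor `Profinite ⥤ Cat` sending `X` to the category of cosheaves on `X` valued in `C`,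
and a continuous map to the direct image functor. -/
def coshFunctor (C : Type u₂) [Category.{v₂} C] : Profinite.{u} ⥤ Cat where
  obj X := Cat.of (CoSheaf X C)
  map f := (coshMapFun f).toCatHom
  map_id _ := rfl
  map_comp _ _ := rfl

/-- The total category `CoSh(C)` of profinite cosheaves valued in `C`, i.e. the Grothendieck
construction of `X ↦ CoSh(X, C)`. Objects are pairs `(X, A)` with `A` a cosheaf on `X`;
a morphism `(X, A) ⟶ (Y, B)` is a pair `(f, φ)` with `f : X ⟶ Y` continuous and
`φ : A ∘ f⁻¹ ⟶ B`. -/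
def CoSh (C : Type u₂) [Category.{v₂} C] :=
  Grothendieck (coshFunctor.{u} C)

instance : Category (CoSh.{u} C) := inferInstanceAs (Category (Grothendieck _))

theorem coSheaf_eqToHom_hom {X : Profinite.{u}} {A B : CoSheaf X C} (h : A = B) :
    InducedCategory.Hom.hom (eqToHom h) = eqToHom (congrArg ObjectProperty.FullSubcategory.obj h) := by
  subst h; rfl

/-- The global cosections functor `CoSh(C) ⥤ C`, `(A, X) ↦ A(X)`. -/
def globalCosections (C : Type u₂) [Category.{v₂} C] : CoSh.{u} C ⥤ C where
  obj P := (ObjectProperty.FullSubcategory.obj P.fiber).obj ⊤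
  map {P Q} g :=
    (ObjectProperty.FullSubcategory.obj P.fiber).map (homOfLE (fun x _ => Set.mem_univ _) : (⊤ : Clopens P.base) ⟶ _) ≫
      NatTrans.app (InducedCategory.Hom.hom g.fiber) ⊤
  map_id := by
    intro P
    erw [CategoryTheory.Functor.map_id, Category.id_comp]
    erw [Grothendieck.id_fiber, coSheaf_eqToHom_hom, eqToHom_app]
    rfl
  map_comp := by
    intro P Q R f g
    erw [CategoryTheory.Functor.map_id, CategoryTheory.Functor.map_id]
    erw [Category.id_comp, Category.id_comp, Category.id_comp]
    show (Grothendieck.comp f g).fiber.hom.app ⊤ = f.fiber.hom.app ⊤ ≫ g.fiber.hom.app ⊤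
    erw [InducedCategory.comp_hom, InducedCategory.comp_hom, NatTrans.comp_app, NatTrans.comp_app,
      coSheaf_eqToHom_hom, eqToHom_app, eqToHom_refl, Category.id_comp]
    rfl

/-- The poset of clopen neighbourhoods of a point, as a category. -/
def Nbhds (X : Profinite.{u}) (x : X) := ObjectProperty.FullSubcategory (fun U : Clopens X => x ∈ U)

instance (X : Profinite.{u}) (x : X) : Category (Nbhds X x) := ObjectProperty.FullSubcategory.category _

/-- The diagram of values of `A` on the clopen neighbourhoods of `x`; the costalk of `A` at `x`
is its (inverse) limit. -/
def costalkDiagram {X : Profinite.{u}} (A : Clopens X ⥤ C) (x : X) : Nbhds X x ⥤ C :=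
  ObjectProperty.ι _ ⋙ A

/-- The costalk `A_x = lim_{V ∋ x} A(V)` of a precosheaf at a point. -/
noncomputable def costalk {X : Profinite.{u}} (A : Clopens X ⥤ C) (x : X)
    [HasLimit (costalkDiagram A x)] : C :=
  limit (costalkDiagram A x)

/-- `c` is *a* costalk of `A` at `x` if the costalk diagram of `A` at `x` admits a limit cone
whose point is isomorphic to `c`. -/
def IsCostalk {X : Profinite.{u}} (A : Clopens X ⥤ C) (x : X) (c : C) : Prop :=
  ∃ t : Cone (costalkDiagram A x), Nonempty (IsLimit t) ∧ Nonempty (t.pt ≅ c)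

/-- The pro-completion of a category: the free completion under cofiltered limits, realised
concretely as the opposite of the category of left-exact functors to `Type`. -/
def ProCompletion (E : Type u₁) [Category.{v₁} E] :=
  (ObjectProperty.FullSubcategory fun F : E ⥤ Type v₁ => Nonempty (PreservesFiniteLimits F))ᵒᵖ

instance (E : Type u₁) [Category.{v₁} E] : Category (ProCompletion E) :=
  inferInstanceAs (Category (ObjectProperty.FullSubcategory _)ᵒᵖ)

/-- The canonical (co-Yoneda) embedding of a category into its pro-completion. -/
def proEmbedding (E : Type u₁) [Category.{v₁} E] : E ⥤ ProCompletion E where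
  obj e := Opposite.op ⟨coyoneda.obj (Opposite.op e), ⟨inferInstance⟩⟩
  map {e e'} f := Quiver.Hom.op
    (show (⟨coyoneda.obj (Opposite.op e'), ⟨inferInstance⟩⟩ : ObjectProperty.FullSubcategory _) ⟶
        ⟨coyoneda.obj (Opposite.op e), ⟨inferInstance⟩⟩ from ObjectProperty.homMk (coyoneda.map f.op))

/-- A regular category: it has finite limits, coequalisers of kernel pairs, and regular
epimorphisms are stable under pullback. -/
class IsRegularCategory (C : Type u₂) [Category.{v₂} C] : Prop where
  hasFiniteLimits : HasFiniteLimits C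
  hasCoeqOfKernelPairs : ∀ {R X Y : C} (f : X ⟶ Y) (a b : R ⟶ X),
    IsPullback a b f f → HasCoequalizer a b
  regularEpi_stable : ∀ {P X Y Z : C} (f : X ⟶ Z) (g : Y ⟶ Z) (p₁ : P ⟶ X) (p₂ : P ⟶ Y),
    IsPullback p₁ p₂ f g → Nonempty (RegularEpi f) → Nonempty (RegularEpi p₂)

/-- `D` is closed under subobjects in its pro-completion: any subobject (in `Pro(D)`) of an
object of `D` is isomorphic to an object of `D`. -/
def ClosedUnderSubobjects (D : Type u) [SmallCategory D] : Prop :=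
  ∀ (d : D) (c : ProCompletion D) (m : c ⟶ (proEmbedding D).obj d), Mono m →
    ∃ d' : D, Nonempty (c ≅ (proEmbedding D).obj d')

/-- The coprojection maps into binary coproducts are monomorphisms. -/
def MonoCoprojections (C : Type u₂) [Category.{v₂} C] : Prop :=
  ∀ (a b p : C) (inl : a ⟶ p) (inr : b ⟶ p),
    Nonempty (IsColimit (BinaryCofan.mk inl inr)) → Mono inl ∧ Mono inr

/-- Cofiltered limits commute with finite colimits in `C`: for every finite category `J`,
the colimit functor `(J ⥤ C) ⥤ C` preserves cofiltered limits (of shapes of size `w`). -/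
def CofilteredLimitsCommuteWithFiniteColimits (C : Type u₂) [Category.{v₂} C]
    [HasFiniteColimits C] : Prop :=
  ∀ (J : Type) [SmallCategory J] [FinCategory J] (K : Type w) [SmallCategory K] [IsCofiltered K],
    PreservesLimitsOfShape K (colim (J := J) (C := C))

/-- The full subcategory of "finite objects" of `CoSh(Pro(D))`: cosheaves `(A, X)` with `X`
finite such that every costalk of `A` lies in (the image of) `D`. -/
def CoShFinProp (D : Type u) [SmallCategory D] (P : CoSh.{u} (ProCompletion D)) : Prop :=
  Finite (P.base : Type u) ∧
    ∀ x : P.base, ∃ d : D, IsCostalk (ObjectProperty.FullSubcategory.obj P.fiber) x ((proEmbedding D).obj d)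

/-- The category `CoSh(Pro(D))_fin` of finite cosheaf objects. -/
def CoShFin (D : Type u) [SmallCategory D] := ObjectProperty.FullSubcategory (CoShFinProp D)

instance (D : Type u) [SmallCategory D] : Category (CoShFin D) := ObjectProperty.FullSubcategory.category _

end ProfiniteCosheaves

/-- Dual to `constantPresheafAdj`: a diagram's colimit is its value at a terminal object. -/
noncomputable def CategoryTheory.Limits.IsTerminal.evaluationAdjConst {J : Type*} [Category J]
    {T : J} (hT : IsTerminal T) (C : Type*) [Category C] :
    (evaluation J C).obj T ⊣ Functor.const J :=
  Adjunction.mkOfHomEquiv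
    { homEquiv := fun F _ => (colimitOfDiagramTerminal hT F).homEquiv
      homEquiv_naturality_left_symm := fun _ _ => rfl
      homEquiv_naturality_right := by intros; ext; simp [IsColimit.homEquiv] }

namespace ProfiniteCosheaves

theorem constant_cosheaf_right_adjoint_to_globalCosections_general (C : Type u₂) [Category.{u} C]
    (X : Profinite.{u})
    (R : (Clopens X ⥤ C) ⥤ CoSheaf X C)
    (adj : ObjectProperty.ι (fun A : Clopens X ⥤ C => IsCosheaf A) ⊣ R) :
    Nonempty
      ((ObjectProperty.ι (fun A : Clopens X ⥤ C => IsCosheaf A) ⋙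
          (evaluation (Clopens X) C).obj (⊤ : Clopens X)) ⊣
        (Functor.const (Clopens X) ⋙ R)) :=
  ⟨adj.comp (isTerminalTop.evaluationAdjConst C)⟩

/-- **Statement 9.** If `C` has all limits and finite colimits, and cofiltered limits commute
with finite colimits in `C`, then the constant cosheaf functor `Δ : C ⥤ CoSh(X, C)` — the
composite of the constant precosheaf functor with cosheafification (any right adjoint `R` of
the inclusion) — is right adjoint to the global cosections functor `A ↦ A(X)`. -/
theorem constant_cosheaf_right_adjoint_to_globalCosections (C : Type u₂) [Category.{u} C]
    [HasLimits C] [HasFiniteColimits C]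
    (hcomm : CofilteredLimitsCommuteWithFiniteColimits.{u} C) (X : Profinite.{u})
    (R : (Clopens X ⥤ C) ⥤ CoSheaf X C)
    (adj : ObjectProperty.ι (fun A : Clopens X ⥤ C => IsCosheaf A) ⊣ R) :
    Nonempty
      ((ObjectProperty.ι (fun A : Clopens X ⥤ C => IsCosheaf A) ⋙
          (evaluation (Clopens X) C).obj (⊤ : Clopens X)) ⊣
        (Functor.const (Clopens X) ⋙ R)) :=
  constant_cosheaf_right_adjoint_to_globalCosections_general C X R adj

end ProfiniteCosheaves
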